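/- arXiv:1607.06490 — 6 statements merged into one kernel-verified Lean document; each statement's English description precedes it below -/
import Mathlib

section
/- Let J be an infinite (p+2)-banded Hessenberg matrix (superdiagonal entries 1) and C ∈ ℂ such that det(J_n - C I_n) ≠ 0 for all n. Let J - CI = LU be the LU factorization with L unit lower triangular and U upper bidiagonal with diagonal entries γ_{np+n+1} and superdiagonal entries 1. Let {P_n} be the associated polynomial family of J. Then for all n ≥ 0: P_n(C) ≠ 0 and γ_{np+n+1} = - P_{n+1}(C) / P_n(C). -/
/-!
The vector `v = (P_k(C))_k` is annihilated by `J - C`: row `n` of `(J - C) v` is exactly the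
recurrence for `P_{n+1}`, because `J` has superdiagonal `1`. Since `J - C = L U` with `L` unit
lower triangular, forward substitution turns `L (U v) = 0` into `U v = 0`, i.e.
`γ_n P_n(C) + P_{n+1}(C) = 0` for the diagonal entries `γ_n` of `U`. Hence
`P_n(C) = (-1)^n γ_0 ⋯ γ_{n-1} = (-1)^n det (J_n - C I_n) ≠ 0`, and the formula for `γ_n`
follows.
-/

open Finset

section Bidiagonal

variable {R : Type*} [CommRing R]

def upperBidiag (g : ℕ → R) (i j : ℕ) : R :=
  if j = i then g i else if j = i + 1 then 1 else 0

lemma sum_upperBidiag_mul (g v : ℕ → R) {m N : ℕ} (h : m + 1 < N) :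
    ∑ k ∈ range N, upperBidiag g m k * v k = g m * v m + v (m + 1) := by
  rw [sum_eq_add m (m + 1) (by omega)]
  · simp [upperBidiag]
  · intro k _ hk
    simp [upperBidiag, hk.1, hk.2]
  · intro hm
    exact absurd (mem_range.mpr (by omega)) hm
  · intro hm
    exact absurd (mem_range.mpr h) hm

lemma det_upperBidiag (g : ℕ → R) (n : ℕ) :
    (Matrix.of fun i j : Fin n => upperBidiag g i j).det = ∏ m ∈ range n, g m := by
  rw [Matrix.det_of_isUpperTriangular, ← Fin.prod_univ_eq_prod_range]
  · simp [upperBidiag]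
  · intro i j hij
    have : (j : ℕ) < i := hij
    simp only [Matrix.of_apply, upperBidiag]
    rw [if_neg (by omega), if_neg (by omega)]

lemma det_of_unitLowerTriangular {L : ℕ → ℕ → R} (hdiag : ∀ i, L i i = 1)
    (hlow : ∀ i j, i < j → L i j = 0) (n : ℕ) :
    (Matrix.of fun i j : Fin n => L i j).det = 1 := by
  rw [Matrix.det_of_isLowerTriangular]
  · simp [hdiag]
  · intro i j hij
    exact hlow i j hij

variable {A L : ℕ → ℕ → R} {g : ℕ → R}

lemma det_eq_prod_of_eq_mul_upperBidiag (hdiag : ∀ i, L i i = 1)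
    (hlow : ∀ i j, i < j → L i j = 0)
    (hA : ∀ i j, A i j = ∑ m ∈ range (i + 1), L i m * upperBidiag g m j) (n : ℕ) :
    (Matrix.of fun i j : Fin n => A i j).det = ∏ m ∈ range n, g m := by
  have hmul : (Matrix.of fun i j : Fin n => A i j)
      = (Matrix.of fun i j : Fin n => L i j) * Matrix.of fun i j : Fin n => upperBidiag g i j := by
    ext i j
    simp only [Matrix.mul_apply, Matrix.of_apply]
    rw [hA, Fin.sum_univ_eq_sum_range (fun m => L i m * upperBidiag g m j)]
    refine sum_subset (fun m hm => ?_) (fun m hm hm' => ?_)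
    · simp only [mem_range] at hm ⊢
      omega
    · simp only [mem_range] at hm hm'
      rw [hlow i m (by omega), zero_mul]
  rw [hmul, Matrix.det_mul, det_of_unitLowerTriangular hdiag hlow, det_upperBidiag, one_mul]

lemma eq_zero_of_sum_range_succ_mul_eq_zero (hdiag : ∀ i, L i i = 1) {w : ℕ → R}
    (h : ∀ n, ∑ m ∈ range (n + 1), L n m * w m = 0) (n : ℕ) : w n = 0 := by
  induction n using Nat.strong_induction_on with
  | _ n ih =>
    have hn := h n
    rwa [sum_range_succ, sum_eq_zero fun m hm => by rw [ih m (mem_range.mp hm), mul_zero],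
      hdiag, zero_add, one_mul] at hn

lemma mul_add_eq_zero_of_eq_mul_upperBidiag (hdiag : ∀ i, L i i = 1)
    (hA : ∀ i j, A i j = ∑ m ∈ range (i + 1), L i m * upperBidiag g m j) {v : ℕ → R}
    (hv : ∀ n, ∑ k ∈ range (n + 2), A n k * v k = 0) (n : ℕ) :
    g n * v n + v (n + 1) = 0 := by
  refine eq_zero_of_sum_range_succ_mul_eq_zero hdiag (w := fun m => g m * v m + v (m + 1))
    (fun n => ?_) n
  calc ∑ m ∈ range (n + 1), L n m * (g m * v m + v (m + 1))
      = ∑ m ∈ range (n + 1), L n m * ∑ k ∈ range (n + 2), upperBidiag g m k * v k :=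
        sum_congr rfl fun m hm => by
          rw [sum_upperBidiag_mul g v (by simp only [mem_range] at hm; omega)]
    _ = ∑ k ∈ range (n + 2), A n k * v k := by
        simp only [hA, mul_sum, sum_mul, mul_assoc]
        exact sum_comm
    _ = 0 := hv n

lemma eq_neg_one_pow_mul_prod_of_mul_add_eq_zero {v : ℕ → R} (h0 : v 0 = 1)
    (h : ∀ n, g n * v n + v (n + 1) = 0) (n : ℕ) :
    v n = (-1) ^ n * ∏ m ∈ range n, g m := by
  induction n with
  | zero => simp [h0]
  | succ n ih =>
    rw [eq_neg_of_add_eq_zero_right (h n), ih, prod_range_succ]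
    ring

end Bidiagonal

lemma sum_Icc_sub_one_eq_sum_range {M : Type*} [AddCommMonoid M] {f : ℤ → M} {a : ℤ}
    (hneg : ∀ i < 0, f i = 0) (hlow : ∀ i < a, f i = 0) (n : ℕ) :
    ∑ i ∈ Icc a (n - 1), f i = ∑ k ∈ range n, f k := by
  have hIcc : ∑ i ∈ Icc a (n - 1), f i = ∑ i ∈ Ico (min a 0) n, f i := by
    refine sum_subset (fun i hi => ?_) (fun i hi hi' => hlow i ?_)
    · simp only [mem_Icc, mem_Ico] at hi ⊢
      omega
    · simp only [mem_Icc, mem_Ico] at hi hi'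
      omega
  have hIco : ∑ i ∈ Ico 0 (n : ℤ), f i = ∑ i ∈ Ico (min a 0) n, f i := by
    refine sum_subset (fun i hi => ?_) (fun i hi hi' => hneg i ?_)
    · simp only [mem_Ico] at hi ⊢
      omega
    · simp only [mem_Ico] at hi hi'
      omega
  rw [hIcc, ← hIco, Int.Ico_eq_finset_map, sum_map]
  simp

lemma sum_range_mul_eq_zero_of_recurrence {R : Type*} [CommRing R] {p : ℕ} {J : ℤ → ℤ → R}
    (hsup : ∀ i : ℤ, J i (i + 1) = 1) (hband : ∀ i j : ℤ, j < i - p → J i j = 0)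
    {P : ℤ → R} (hneg : ∀ i < 0, P i = 0) {z : R} (n : ℕ)
    (hrec : ∑ i ∈ Icc ((n : ℤ) - p) (n - 1), J n i * P i + (J n n - z) * P n + P (n + 1)
      = 0) :
    ∑ k ∈ range (n + 2), (J n k - if n = k then z else 0) * P k = 0 := by
  rw [sum_Icc_sub_one_eq_sum_range (fun i hi => by rw [hneg i hi, mul_zero])
    (fun i hi => by rw [hband n i hi, zero_mul])] at hrec
  rw [sum_range_succ, sum_range_succ, sum_congr rfl fun k hk => by
    rw [if_neg (by simp only [mem_range] at hk; omega), sub_zero], if_pos rfl, if_neg (by omega),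
    sub_zero]
  push_cast
  rw [hsup]
  linear_combination hrec

theorem stmt_3_general (p : ℕ)
    (J : ℤ → ℤ → ℂ)
    (hsup : ∀ i : ℤ, J i (i+1) = 1)
    (hband : ∀ i j : ℤ, (j < i - p ∨ i + 1 < j) → J i j = 0)
    (C : ℂ)
    (hdet : ∀ n : ℕ,
      (Matrix.of fun i j : Fin n => J i j - if i = j then C else 0).det ≠ 0)
    (L : ℕ → ℕ → ℂ) (γ : ℕ → ℂ)
    (hLdiag : ∀ i : ℕ, L i i = 1)
    (hLlow : ∀ i j : ℕ, i < j → L i j = 0)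
    (hLU : ∀ i j : ℕ,
      J i j - (if i = j then C else 0)
        = ∑ m ∈ Finset.range (i+1),
            L i m * (if j = m then γ (m*p+m+1) else if j = m+1 then 1 else 0))
    (P : ℤ → ℂ → ℂ)
    (hP0 : ∀ z, P 0 z = 1)
    (hPneg : ∀ n : ℤ, n < 0 → ∀ z, P n z = 0)
    (hrec : ∀ n : ℤ, 0 ≤ n → ∀ z,
      (∑ i ∈ Finset.Icc (n - p) (n - 1), J n i * P i z)
        + (J n n - z) * P n z + P (n+1) z = 0) :
    ∀ n : ℕ, P n C ≠ 0 ∧ γ (n*p+n+1) = -(P (n+1) C) / P n C := by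
  set g : ℕ → ℂ := fun m => γ (m * p + m + 1)
  have hLU' : ∀ i j : ℕ, J i j - (if i = j then C else 0)
      = ∑ m ∈ range (i + 1), L i m * upperBidiag g m j := hLU
  have hrow (n : ℕ) : ∑ k ∈ range (n + 2), (J n k - if n = k then C else 0) * P k C = 0 :=
    sum_range_mul_eq_zero_of_recurrence hsup (fun i j h => hband i j (Or.inl h))
      (fun i hi => hPneg i hi C) n (hrec n n.cast_nonneg C)
  have hstep (n : ℕ) : g n * P n C + P (n + 1 : ℕ) C = 0 :=
    mul_add_eq_zero_of_eq_mul_upperBidiag hLdiag hLU' hrow n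
  intro n
  have hPn : P n C ≠ 0 := by
    rw [eq_neg_one_pow_mul_prod_of_mul_add_eq_zero (v := fun k : ℕ => P k C) (hP0 C) hstep n,
      ← det_eq_prod_of_eq_mul_upperBidiag hLdiag hLlow hLU' n]
    refine mul_ne_zero (pow_ne_zero _ (by norm_num)) ?_
    simpa [Fin.val_inj] using hdet n
  refine ⟨hPn, ?_⟩
  rw [eq_div_iff hPn]
  push_cast at hstep
  linear_combination hstep n

/-- For the LU factorization `J - CI = LU` of a `(p+2)`-banded
Hessenberg matrix with all leading minors of `J - CI` nonzero, the diagonal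
entries of `U` are `γ_{np+n+1} = -P_{n+1}(C)/P_n(C)`. -/
theorem stmt_3 (p : ℕ) (hp : 1 ≤ p)
    (J : ℤ → ℤ → ℂ)
    (hsup : ∀ i : ℤ, J i (i+1) = 1)
    (hband : ∀ i j : ℤ, (j < i - p ∨ i + 1 < j) → J i j = 0)
    (C : ℂ)
    (hdet : ∀ n : ℕ,
      (Matrix.of fun i j : Fin n => J i j - if i = j then C else 0).det ≠ 0)
    (L : ℕ → ℕ → ℂ) (γ : ℕ → ℂ)
    (hLdiag : ∀ i : ℕ, L i i = 1)
    (hLlow : ∀ i j : ℕ, i < j → L i j = 0)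
    (hLband : ∀ i j : ℕ, j + p < i → L i j = 0)
    (hLU : ∀ i j : ℕ,
      J i j - (if i = j then C else 0)
        = ∑ m ∈ Finset.range (i+1),
            L i m * (if j = m then γ (m*p+m+1) else if j = m+1 then 1 else 0))
    (P : ℤ → ℂ → ℂ)
    (hP0 : ∀ z, P 0 z = 1)
    (hPneg : ∀ n : ℤ, n < 0 → ∀ z, P n z = 0)
    (hrec : ∀ n : ℤ, 0 ≤ n → ∀ z,
      (∑ i ∈ Finset.Icc (n - p) (n - 1), J n i * P i z)
        + (J n n - z) * P n z + P (n+1) z = 0) :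
    ∀ n : ℕ, P n C ≠ 0 ∧ γ (n*p+n+1) = -(P (n+1) C) / P n C :=
  stmt_3_general p J hsup hband C hdet L γ hLdiag hLlow hLU P hP0 hPneg hrec
end

section
/- Let γ_n(t), n ∈ ℤ (with γ_n ≡ 0 for n ≤ 0), be differentiable functions satisfying the discrete KdV equation γ̇_n = γ_n(Σ_{i=1}^{p} γ_{n+i} - Σ_{i=1}^{p} γ_{n-i}). For fixed i ≥ 1 and k ≥ -1, define δ = γ_{(i-1)p+i} · γ_{ip+i} · ... · γ_{(k+i)p+i} (product of the γ's with indices (r+i)p+i for r = -1,...,k). Then δ̇ = δ · (Σ_{j=0}^{p} γ_{(k+i)p+i+j} - Σ_{j=0}^{p} γ_{(i-2)p+i+j}). -/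
/-! Writing `S m = ∑_{j=0}^{p} γ_{m+j}`, the right-hand side of the KdV equation for `γ_n` is
`γ_n (S n - S (n - p))`. Consecutive indices of the product `δ` differ by `p`, so the logarithmic
derivatives of its factors telescope. -/

open Finset

theorem sum_Icc_one_sub_sum_Icc_one_eq {G : Type*} [AddCommGroup G] (f : ℤ → G) (n : ℤ) (p : ℕ) :
    ∑ j ∈ Icc (1 : ℤ) p, f (n + j) - ∑ j ∈ Icc (1 : ℤ) p, f (n - j)
      = ∑ j ∈ Icc (0 : ℤ) p, f (n + j) - ∑ j ∈ Icc (0 : ℤ) p, f (n - p + j) := by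
  have hreflect : ∑ j ∈ Icc (0 : ℤ) p, f (n - p + j) = ∑ j ∈ Icc (0 : ℤ) p, f (n - j) :=
    sum_nbij' (fun j ↦ p - j) (fun j ↦ p - j)
      (fun j hj ↦ by simp only [mem_Icc] at hj ⊢; omega)
      (fun j hj ↦ by simp only [mem_Icc] at hj ⊢; omega)
      (fun _ _ ↦ by ring) (fun _ _ ↦ by ring) (fun _ _ ↦ by ring_nf)
  have hIcc : Icc (0 : ℤ) p = insert 0 (Icc (1 : ℤ) p) := by
    ext j; simp only [mem_Icc, mem_insert]; omega
  have h0 : (0 : ℤ) ∉ Icc (1 : ℤ) p := by simp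
  rw [hreflect, hIcc, sum_insert h0, sum_insert h0, add_zero, sub_zero, add_sub_add_left_eq_sub]

theorem hasDerivAt_prod_Icc_of_telescoping {𝕜 𝔸 : Type*} [NontriviallyNormedField 𝕜]
    [NormedCommRing 𝔸] [NormedAlgebra 𝕜 𝔸] (g : ℤ → 𝕜 → 𝔸) (S : ℤ → 𝔸) (x : 𝕜)
    (hg : ∀ r, HasDerivAt (g r) (g r x * (S r - S (r - 1))) x) (a k : ℤ) (hk : a - 1 ≤ k) :
    HasDerivAt (fun y ↦ ∏ r ∈ Icc a k, g r y) ((∏ r ∈ Icc a k, g r x) * (S k - S (a - 1))) x := by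
  induction k, hk using Int.leInduction with
  | base => simpa using hasDerivAt_const x (1 : 𝔸)
  | succ k hk ih =>
    have hIcc : Icc a (k + 1) = insert (k + 1) (Icc a k) := by
      ext r; simp only [mem_Icc, mem_insert]; omega
    have hnot : k + 1 ∉ Icc a k := by simp
    simp only [hIcc, prod_insert hnot]
    convert (hg (k + 1)).fun_mul ih using 1
    rw [add_sub_cancel_right]
    ring

theorem stmt_4_general (p : ℕ)
    (γ : ℤ → ℝ → ℂ)
    (hKdV : ∀ n : ℤ, ∀ t : ℝ,
      HasDerivAt (γ n)
        (γ n t * ((∑ i ∈ Finset.Icc (1:ℤ) p, γ (n + i) t)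
          - ∑ i ∈ Finset.Icc (1:ℤ) p, γ (n - i) t)) t)
    (i k : ℤ) (hk : -1 ≤ k) :
    ∀ t : ℝ,
      HasDerivAt (fun s => ∏ r ∈ Finset.Icc (-1 : ℤ) k, γ ((r + i) * p + i) s)
        ((∏ r ∈ Finset.Icc (-1 : ℤ) k, γ ((r + i) * p + i) t)
          * ((∑ j ∈ Finset.Icc (0:ℤ) p, γ ((k + i) * p + i + j) t)
            - ∑ j ∈ Finset.Icc (0:ℤ) p, γ ((i - 2) * p + i + j) t)) t := by
  intro t
  set S : ℤ → ℂ := fun r ↦ ∑ j ∈ Icc (0 : ℤ) p, γ ((r + i) * p + i + j) t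
  have hfactor : ∀ r, HasDerivAt (γ ((r + i) * p + i))
      (γ ((r + i) * p + i) t * (S r - S (r - 1))) t := by
    intro r
    have h := hKdV ((r + i) * p + i) t
    rwa [sum_Icc_one_sub_sum_Icc_one_eq (γ · t),
      show (r + i) * p + i - p = (r - 1 + i) * p + i by ring] at h
  have h := hasDerivAt_prod_Icc_of_telescoping _ S t hfactor (-1) k (by omega)
  have hS : S (-1 - 1) = ∑ j ∈ Icc (0 : ℤ) p, γ ((i - 2) * p + i + j) t :=
    sum_congr rfl fun j _ ↦ by ring_nf
  rwa [hS] at h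

/-- Logarithmic-derivative (telescoping) identity for the product
`δ^{(i)}_k = γ_{(i-1)p+i} γ_{ip+i} ⋯ γ_{(k+i)p+i}` of solutions of the discrete
KdV equation. -/
theorem stmt_4 (p : ℕ) (hp : 1 ≤ p)
    (γ : ℤ → ℝ → ℂ)
    (hzero : ∀ n : ℤ, n ≤ 0 → ∀ t, γ n t = 0)
    (hKdV : ∀ n : ℤ, ∀ t : ℝ,
      HasDerivAt (γ n)
        (γ n t * ((∑ i ∈ Finset.Icc (1:ℤ) p, γ (n + i) t)
          - ∑ i ∈ Finset.Icc (1:ℤ) p, γ (n - i) t)) t)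
    (i k : ℤ) (hi : 1 ≤ i) (hk : -1 ≤ k) :
    ∀ t : ℝ,
      HasDerivAt (fun s => ∏ r ∈ Finset.Icc (-1 : ℤ) k, γ ((r + i) * p + i) s)
        ((∏ r ∈ Finset.Icc (-1 : ℤ) k, γ ((r + i) * p + i) t)
          * ((∑ j ∈ Finset.Icc (0:ℤ) p, γ ((k + i) * p + i + j) t)
            - ∑ j ∈ Finset.Icc (0:ℤ) p, γ ((i - 2) * p + i + j) t)) t :=
  stmt_4_general p γ hKdV i k hk
end

section
/- Let γ_n(t), n ∈ ℤ (with γ_n ≡ 0 for n ≤ 0), be differentiable functions satisfying γ̇_n = γ_n(Σ_{i=1}^{p} γ_{n+i} - Σ_{i=1}^{p} γ_{n-i}). Fix integers i ≥ 1, k ≥ -1 and a tuple (i_1,...,i_{k+3}) with k+3 ≤ i_{k+3} ≤ ... ≤ i_1 ≤ p+1. Define Δ = γ_{(i-2)p+i+i_1-1} · γ_{(i-1)p+i+i_2-1} ⋯ γ_{(i+k)p+i+i_{k+3}-1}. Then Δ̇/Δ (when Δ ≠ 0) equals Σ_{j=1}^p γ_{(k+i)p+i+i_{k+3}+j-1}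 − Σ_{j=1}^p γ_{(i-3)p+i+i_1+j-2} + Σ_{r=1}^{k+2} ( Σ_{j=i+i_r}^{i+i_r+p-1} γ_{(r+i-3)p+j} − Σ_{j=i+i_{r+1}-1}^{i+i_{r+1}+p-2} γ_{(r+i-3)p+j} ). -/
/-!
`Δ̇/Δ` is the sum of the logarithmic derivatives of the factors, i.e. of the KdV right-hand
sides `U(n_r) - L(n_r)`, where `U(n)` and `L(n)` are the sums of `γ` over the `p` indices just
above and just below `n`. Pairing the upper window of factor `r` with the lower window of
factor `r + 1` leaves over the upper window of the last factor and the lower window of the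
first. Every sum in the statement is one of these windows, written with a translated
summation index.
-/

open Finset

section IntervalSums

variable {M : Type*} [AddCommMonoid M] (f : ℤ → M) {e : ℤ → ℤ} {a b a' b' : ℤ}

theorem sum_Icc_comp_eq_of_translate (he : ∀ j, e j = j + (a' - a)) (hb : b' - a' = b - a) :
    ∑ j ∈ Icc a b, f (e j) = ∑ j ∈ Icc a' b', f j := by
  obtain rfl : e = (· + (a' - a)) := funext he
  refine sum_nbij' _ (· - (a' - a)) ?_ ?_ ?_ ?_ fun _ _ => rfl <;>
    intro j <;> simp only [mem_Icc] <;> omega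

theorem sum_Icc_comp_eq_of_reflect (he : ∀ j, e j = a' + b - j) (hb : b' - a' = b - a) :
    ∑ j ∈ Icc a b, f (e j) = ∑ j ∈ Icc a' b', f j := by
  obtain rfl : e = (a' + b - ·) := funext he
  refine sum_nbij' _ (a' + b - ·) ?_ ?_ ?_ ?_ fun _ _ => rfl <;>
    intro j <;> simp only [mem_Icc] <;> omega

end IntervalSums

theorem sum_Icc_sub_eq_sub_add_sum_Icc_sub_succ {M : Type*} [AddCommGroup M] (A B : ℤ → M)
    {m : ℤ} (hm : 1 ≤ m) :
    ∑ r ∈ Icc 1 m, (A r - B r) = A m - B 1 + ∑ r ∈ Icc 1 (m - 1), (A r - B (r + 1)) := by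
  have hA : ∑ r ∈ Icc 1 m, A r = A m + ∑ r ∈ Icc 1 (m - 1), A r := by
    rw [← sum_insert (by simp)]
    congr 1
    ext r; simp only [mem_Icc, mem_insert]; omega
  have hB : ∑ r ∈ Icc 1 m, B r = B 1 + ∑ r ∈ Icc 2 m, B r := by
    rw [← sum_insert (by simp)]
    congr 1
    ext r; simp only [mem_Icc, mem_insert]; omega
  have hshift : ∑ r ∈ Icc 1 (m - 1), B (r + 1) = ∑ r ∈ Icc 2 m, B r :=
    sum_Icc_comp_eq_of_translate B (fun r => by ring) (by ring)
  rw [sum_sub_distrib, sum_sub_distrib, hA, hB, hshift]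
  abel

theorem logDeriv_eq_of_hasDerivAt_mul {𝕜 𝕜' : Type*} [NontriviallyNormedField 𝕜]
    [NontriviallyNormedField 𝕜'] [NormedAlgebra 𝕜 𝕜'] {f : 𝕜 → 𝕜'} {x : 𝕜} {g : 𝕜'}
    (hf : HasDerivAt f (f x * g) x) (hx : f x ≠ 0) : logDeriv f x = g := by
  rw [logDeriv_apply, hf.deriv, mul_div_cancel_left₀ _ hx]

theorem stmt_5_general (p : ℕ)
    (γ : ℤ → ℝ → ℂ)
    (hKdV : ∀ n : ℤ, ∀ t : ℝ,
      HasDerivAt (γ n)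
        (γ n t * ((∑ j ∈ Finset.Icc (1:ℤ) p, γ (n + j) t)
          - ∑ j ∈ Finset.Icc (1:ℤ) p, γ (n - j) t)) t)
    (i k : ℤ) (hk : -1 ≤ k)
    (ι : ℤ → ℤ) :
    ∀ t : ℝ,
      (∏ r ∈ Finset.Icc (1:ℤ) (k+3), γ ((i - 3 + r) * p + i + ι r - 1) t) ≠ 0 →
      deriv (fun s => ∏ r ∈ Finset.Icc (1:ℤ) (k+3), γ ((i - 3 + r) * p + i + ι r - 1) s) t
          / (∏ r ∈ Finset.Icc (1:ℤ) (k+3), γ ((i - 3 + r) * p + i + ι r - 1) t)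
        = (∑ j ∈ Finset.Icc (1:ℤ) p, γ ((k + i) * p + i + ι (k+3) + j - 1) t)
          - (∑ j ∈ Finset.Icc (1:ℤ) p, γ ((i - 3) * p + i + ι 1 + j - 2) t)
          + ∑ r ∈ Finset.Icc (1:ℤ) (k+2),
              ((∑ j ∈ Finset.Icc (i + ι r) (i + ι r + p - 1), γ ((r + i - 3) * p + j) t)
                - ∑ j ∈ Finset.Icc (i + ι (r+1) - 1) (i + ι (r+1) + p - 2),
                    γ ((r + i - 3) * p + j) t) := by
  intro t hΔ
  have hfactor := prod_ne_zero_iff.mp hΔ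
  have hwindow : ∀ n : ℤ, (∑ j ∈ Icc (1:ℤ) p, γ (n + j) t) - ∑ j ∈ Icc (1:ℤ) p, γ (n - j) t
      = (∑ m ∈ Icc (n + 1) (n + p), γ m t) - ∑ m ∈ Icc (n - p) (n - 1), γ m t := fun n => by
    congr 1
    · exact sum_Icc_comp_eq_of_translate (γ · t) (fun j => by ring) (by ring)
    · exact sum_Icc_comp_eq_of_reflect (γ · t) (fun j => by ring) (by ring)
  rw [← logDeriv_apply, logDeriv_prod hfactor fun r _ => (hKdV _ t).differentiableAt,
    sum_congr rfl fun r hr => logDeriv_eq_of_hasDerivAt_mul (hKdV _ t) (hfactor r hr)]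
  simp only [hwindow]
  rw [sum_Icc_sub_eq_sub_add_sum_Icc_sub_succ _ _ (by omega), show k + 3 - 1 = k + 2 by ring]
  congr 2
  on_goal 3 => funext r; congr 1
  all_goals exact (sum_Icc_comp_eq_of_translate (γ · t) (fun j => by ring) (by ring)).symm

/-- The logarithmic derivative of the monomial
`Δ = γ_{(i-2)p+i+i_1-1} ⋯ γ_{(i+k)p+i+i_{k+3}-1}` of solutions of the discrete
KdV equation equals the regrouped sum of the KdV right-hand sides. -/
theorem stmt_5 (p : ℕ) (hp : 1 ≤ p)
    (γ : ℤ → ℝ → ℂ)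
    (hzero : ∀ n : ℤ, n ≤ 0 → ∀ t, γ n t = 0)
    (hKdV : ∀ n : ℤ, ∀ t : ℝ,
      HasDerivAt (γ n)
        (γ n t * ((∑ j ∈ Finset.Icc (1:ℤ) p, γ (n + j) t)
          - ∑ j ∈ Finset.Icc (1:ℤ) p, γ (n - j) t)) t)
    (i k : ℤ) (hi : 1 ≤ i) (hk : -1 ≤ k)
    (ι : ℤ → ℤ)
    (hmono : ∀ r s : ℤ, 1 ≤ r → r ≤ s → s ≤ k + 3 → ι s ≤ ι r)
    (hlo : k + 3 ≤ ι (k + 3)) (hhi : ι 1 ≤ p + 1) :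
    ∀ t : ℝ,
      (∏ r ∈ Finset.Icc (1:ℤ) (k+3), γ ((i - 3 + r) * p + i + ι r - 1) t) ≠ 0 →
      deriv (fun s => ∏ r ∈ Finset.Icc (1:ℤ) (k+3), γ ((i - 3 + r) * p + i + ι r - 1) s) t
          / (∏ r ∈ Finset.Icc (1:ℤ) (k+3), γ ((i - 3 + r) * p + i + ι r - 1) t)
        = (∑ j ∈ Finset.Icc (1:ℤ) p, γ ((k + i) * p + i + ι (k+3) + j - 1) t)
          - (∑ j ∈ Finset.Icc (1:ℤ) p, γ ((i - 3) * p + i + ι 1 + j - 2) t)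
          + ∑ r ∈ Finset.Icc (1:ℤ) (k+2),
              ((∑ j ∈ Finset.Icc (i + ι r) (i + ι r + p - 1), γ ((r + i - 3) * p + j) t)
                - ∑ j ∈ Finset.Icc (i + ι (r+1) - 1) (i + ι (r+1) + p - 2),
                    γ ((r + i - 3) * p + j) t) :=
  stmt_5_general p γ hKdV i k hk ι
end

section
/- Let p ≥ 1 and let γ_n, n ∈ ℤ (γ_n = 0 for n ≤ 0), be arbitrary complex numbers. For q ∈ {0,...,p}, k ≥ −1, i ≥ 1, let E^{(q)}_{k+2} be the set of tuples (i_1,...,i_{k+3}) with q+k+3 ≤ i_{k+3} ≤ ⋯ ≤ i_1 ≤ q+p+1, and for each such tuple let Δ^{(i)}_k = γ_{(i-2)p+i+i_1-1} γ_{(i-1)p+i+i_2-1} ⋯ γ_{(i+k)p+i+i_{k+3}-1}. Then Σ over E^{(q)}_{k+2} of Δ^{(i)}_k · ( Σ_{s=i_1}^{q+p+1} γ_{(i-2)p+i+s-1} − Σ_{s=i_2}^{i_1} γ_{(i-2)p+i+s-1} ) = 0. -/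
/-!
Expanding the brackets, both sums run over pairs `(f, s)` of a decreasing tuple `f` and an
index `s`, with weight `Δ(f) γ(s)`: in the first `f 0 ≤ s`, in the second `f 1 ≤ s ≤ f 0`.
The map `(f, s) ↦ (f[0 ↦ s], f 0)` exchanges the two index sets, it is an involution, and it
preserves the weight because the first factor of `Δ` carries the same `γ`-shift as the bracket.
-/

open Finset Function

theorem Fin.antitone_update_zero {α : Type*} [Preorder α] {n : ℕ} {f : Fin (n + 2) → α}
    (hf : Antitone f) {s : α} (hs : f 1 ≤ s) : Antitone (update f 0 s) := by
  refine Fin.antitone_iff_succ_le.2 (Fin.cases ?_ fun i => ?_)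
  · simpa using hs
  · simpa [update_of_ne (Fin.succ_ne_zero _)] using hf (Fin.castSucc_le_succ i.succ)

theorem Fin.prod_update_zero_mul {α M : Type*} [CommMonoid M] {n : ℕ} (c : Fin (n + 1) → α → M)
    (f : Fin (n + 1) → α) (s : α) :
    (∏ r, c r (update f 0 s r)) * c 0 (f 0) = (∏ r, c r (f r)) * c 0 s := by
  simp only [Fin.prod_univ_succ, update_self, update_of_ne (Fin.succ_ne_zero _)]
  ac_rfl

section AntitoneTuples

variable {α : Type*} [Preorder α] [LocallyFiniteOrder α] [DecidableLE α]

/-- For `n = k + 3`, `A = q + k + 3`, `B = q + p + 1` this is the paper's `E^{(q)}_{k+2}`. -/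
def antitoneTuples (n : ℕ) (A B : α) : Finset (Fin n → α) :=
  (Fintype.piFinset fun _ => Icc A B).filter fun f => ∀ a b, a ≤ b → f b ≤ f a

theorem mem_antitoneTuples {n : ℕ} {A B : α} {f : Fin n → α} :
    f ∈ antitoneTuples n A B ↔ (∀ r, f r ∈ Icc A B) ∧ Antitone f := by
  simp [antitoneTuples, Antitone]

theorem sum_antitoneTuples_mul_sum_Icc_head {R : Type*} [CommSemiring R] {n : ℕ} (A B : α)
    (c : Fin (n + 2) → α → R) :
    ∑ f ∈ antitoneTuples (n + 2) A B, (∏ r, c r (f r)) * ∑ s ∈ Icc (f 0) B, c 0 s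
      = ∑ f ∈ antitoneTuples (n + 2) A B, (∏ r, c r (f r)) * ∑ s ∈ Icc (f 1) (f 0), c 0 s := by
  simp only [mul_sum]
  rw [sum_sigma', sum_sigma']
  refine sum_nbij' (fun x => ⟨update x.1 0 x.2, x.1 0⟩) (fun x => ⟨update x.1 0 x.2, x.1 0⟩)
    ?_ ?_ ?_ ?_ fun x _ => (Fin.prod_update_zero_mul c x.1 x.2).symm
  · rintro ⟨f, s⟩ h
    simp only [mem_sigma, mem_Icc, mem_antitoneTuples] at h ⊢
    obtain ⟨⟨hbox, hf⟩, h0s, hsB⟩ := h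
    refine ⟨⟨fun r => ?_, Fin.antitone_update_zero hf ((hf (Fin.zero_le 1)).trans h0s)⟩, ?_⟩
    · rcases eq_or_ne r 0 with rfl | hr
      · simpa using ⟨(hbox 0).1.trans h0s, hsB⟩
      · simpa [update_of_ne hr] using hbox r
    · simpa using ⟨hf (Fin.zero_le 1), h0s⟩
  · rintro ⟨f, s⟩ h
    simp only [mem_sigma, mem_Icc, mem_antitoneTuples] at h ⊢
    obtain ⟨⟨hbox, hf⟩, h1s, hs0⟩ := h
    refine ⟨⟨fun r => ?_, Fin.antitone_update_zero hf h1s⟩, ?_⟩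
    · rcases eq_or_ne r 0 with rfl | hr
      · simpa using ⟨(hbox 1).1.trans h1s, hs0.trans (hbox 0).2⟩
      · simpa [update_of_ne hr] using hbox r
    · simpa using ⟨hs0, (hbox 0).2⟩
  · simp
  · simp

end AntitoneTuples

/-- identity (r) of the paper: with `E^{(q)}_{k+2}` the set of
weakly decreasing tuples `(i_1,…,i_{k+3})` in `[q+k+3, q+p+1]` and
`Δ^{(i)}_k = γ_{(i-2)p+i+i_1-1} ⋯ γ_{(i+k)p+i+i_{k+3}-1}`,
`∑ Δ^{(i)}_k (∑_{s=i_1}^{q+p+1} γ_{(i-2)p+i+s-1} − ∑_{s=i_2}^{i_1} γ_{(i-2)p+i+s-1}) = 0`. -/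
theorem stmt_15 (p : ℕ) (q : ℕ)
    (γ : ℤ → ℂ)
    (k : ℤ) (hk : -1 ≤ k) (i : ℤ)
    (m : ℕ) (hm : (m:ℤ) = k + 3) :
    ∑ f ∈ ((Fintype.piFinset fun _ : Fin m =>
          Finset.Icc ((q:ℤ) + k + 3) ((q:ℤ) + p + 1)).filter
        (fun f => ∀ a b : Fin m, a ≤ b → f b ≤ f a)),
      (∏ r : Fin m, γ ((i - 2 + (r:ℕ)) * p + i + f r - 1))
        * ((∑ s ∈ Finset.Icc (f ⟨0, by omega⟩) ((q:ℤ) + p + 1),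
              γ ((i - 2) * p + i + s - 1))
          - ∑ s ∈ Finset.Icc (f ⟨1, by omega⟩) (f ⟨0, by omega⟩),
              γ ((i - 2) * p + i + s - 1)) = 0 := by
  obtain ⟨n, rfl⟩ : ∃ n, m = n + 2 := ⟨m - 2, by omega⟩
  simp only [mul_sub, sum_sub_distrib, sub_eq_zero]
  simpa [antitoneTuples] using
    sum_antitoneTuples_mul_sum_Icc_head ((q : ℤ) + k + 3) ((q : ℤ) + p + 1)
      fun (r : Fin (n + 2)) t => γ ((i - 2 + (r : ℕ)) * p + i + t - 1)
end

section
/- Let γ_n, n ∈ ℤ (γ_n = 0 for n ≤ 0), be arbitrary complex numbers and fix p ≥ 1, q ∈ {0,...,p}, k ≥ −1, i ≥ 1. With E^{(q)}_{k+2} and Δ^{(i)}_k as above, for each r ∈ {2,...,k+2}: Σ over E^{(q)}_{k+2} of Δ^{(i)}_k · ( Σ_{s=i_r}^{i_{r-1}} γ_{(r+i-4)p+i+s+p-1} − Σ_{s=i_{r+1}}^{i_r} γ_{(r+i-4)p+i+s+p-1} ) = 0. -/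
/-!
After expanding the difference, each side is a sum over pairs `(f, t)` of an antitone tuple `f`
and an extra value `t`, with weight `∏ₛ γ(… f s …) · γ(… t …)` in which `t` carries the same
weight as the coordinate `r - 1` of `f`. Exchanging `t` with `f (r - 1)` maps the pairs with
`f (r - 1) ≤ t ≤ f (r - 2)` bijectively onto those with `f r ≤ t ≤ f (r - 1)` and preserves the
weight.
-/

open Finset Function

theorem Antitone.update_of_bounds {ι α : Type*} [LinearOrder ι] [LinearOrder α] [DecidableEq ι]
    {f : ι → α} (hf : Antitone f) {j : ι} {t : α}
    (hright : ∀ x, j < x → f x ≤ t) (hleft : ∀ x, x < j → t ≤ f x) :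
    Antitone (update f j t) := by
  intro x y hxy
  by_cases hx : x = j <;> by_cases hy : y = j
  · simp [hx, hy]
  · simpa [hx, hy] using hright y (lt_of_le_of_ne (hx ▸ hxy) (Ne.symm hy))
  · simpa [hx, hy] using hleft x (lt_of_le_of_ne (hy ▸ hxy) hx)
  · simpa [hx, hy] using hf hxy

theorem Fintype.prod_apply_update_mul_swap {ι α M : Type*} [CommMonoid M] [Fintype ι]
    [DecidableEq ι] (w : ι → α → M) (f : ι → α) (j : ι) (t : α) :
    (∏ s, w s (update f j t s)) * w j (f j) = (∏ s, w s (f s)) * w j t := by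
  simp only [apply_update (fun s => w s), prod_update_of_mem (mem_univ j),
    ← mul_prod_erase univ (fun s => w s (f s)) (mem_univ j), sdiff_singleton_eq_erase]
  ac_rfl

theorem Fintype.update_mem_piFinset_Icc {ι α : Type*} [Fintype ι] [DecidableEq ι] [Preorder α]
    [LocallyFiniteOrder α] {lo hi : α} {f : ι → α}
    (hf : f ∈ piFinset fun _ => Icc lo hi) {j x y : ι} {t : α} (hx : f x ≤ t) (hy : t ≤ f y) :
    update f j t ∈ piFinset fun _ => Icc lo hi := by
  simp only [mem_piFinset, mem_Icc] at hf ⊢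
  intro s
  by_cases hs : s = j
  · simpa [hs] using ⟨(hf x).1.trans hx, hy.trans (hf y).2⟩
  · simpa [hs] using hf s

theorem sum_antitone_sum_Icc_above_eq_below {ι α R : Type*} [Fintype ι] [LinearOrder ι]
    [LinearOrder α] [LocallyFiniteOrder α] [CommSemiring R]
    [DecidablePred fun f : ι → α => ∀ x y : ι, x ≤ y → f y ≤ f x]
    (lo hi : α) {a j b : ι} (haj : a ⋖ j) (hjb : j ⋖ b) (w : ι → α → R) :
    ∑ f ∈ (Fintype.piFinset fun _ : ι => Icc lo hi).filter
        (fun f => ∀ x y : ι, x ≤ y → f y ≤ f x),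
      ∑ t ∈ Icc (f j) (f a), (∏ s, w s (f s)) * w j t =
    ∑ f ∈ (Fintype.piFinset fun _ : ι => Icc lo hi).filter
        (fun f => ∀ x y : ι, x ≤ y → f y ≤ f x),
      ∑ t ∈ Icc (f b) (f j), (∏ s, w s (f s)) * w j t := by
  rw [sum_sigma', sum_sigma']
  refine sum_nbij' (fun x => ⟨update x.1 j x.2, x.1 j⟩) (fun x => ⟨update x.1 j x.2, x.1 j⟩)
    ?_ ?_ (fun x _ => by simp) (fun x _ => by simp)
    (fun x _ => (Fintype.prod_apply_update_mul_swap w x.1 j x.2).symm)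
  · rintro ⟨f, t⟩
    simp only [mem_sigma, mem_filter, mem_Icc, update_self]
    rintro ⟨⟨hbox, hf : Antitone f⟩, hjt, hta⟩
    refine ⟨⟨Fintype.update_mem_piFinset_Icc hbox hjt hta, Antitone.update_of_bounds hf
      (fun x hx => (hf hx.le).trans hjt) (fun x hx => hta.trans (hf (haj.le_of_lt hx)))⟩,
      ?_, hjt⟩
    simpa [update_of_ne hjb.lt.ne'] using hf hjb.le
  · rintro ⟨f, t⟩
    simp only [mem_sigma, mem_filter, mem_Icc, update_self]
    rintro ⟨⟨hbox, hf : Antitone f⟩, hbt, htj⟩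
    refine ⟨⟨Fintype.update_mem_piFinset_Icc hbox hbt htj, Antitone.update_of_bounds hf
      (fun x hx => (hf (hjb.ge_of_gt hx)).trans hbt) (fun x hx => htj.trans (hf hx.le))⟩,
      htj, ?_⟩
    simpa [update_of_ne haj.lt.ne] using hf haj.le

/-- identity (lll) of the paper: for `2 ≤ r ≤ k+2`,
`∑_{E^{(q)}_{k+2}} Δ^{(i)}_k (∑_{s=i_r}^{i_{r-1}} γ_{(r+i-4)p+i+s+p-1}
  − ∑_{s=i_{r+1}}^{i_r} γ_{(r+i-4)p+i+s+p-1}) = 0`. -/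
theorem stmt_16 (p : ℕ) (q : ℕ) (γ : ℤ → ℂ) (k : ℤ) (i : ℤ)
    (m : ℕ) (hm : (m:ℤ) = k + 3)
    (r : ℕ) (hr1 : 2 ≤ r) (hr2 : (r:ℤ) ≤ k + 2) :
    ∑ f ∈ ((Fintype.piFinset fun _ : Fin m =>
          Finset.Icc ((q:ℤ) + k + 3) ((q:ℤ) + p + 1)).filter
        (fun f => ∀ a b : Fin m, a ≤ b → f b ≤ f a)),
      (∏ s : Fin m, γ ((i - 2 + (s:ℕ)) * p + i + f s - 1))
        * ((∑ s ∈ Finset.Icc (f ⟨r - 1, by omega⟩) (f ⟨r - 2, by omega⟩),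
              γ (((r:ℤ) + i - 4) * p + i + s + p - 1))
          - ∑ s ∈ Finset.Icc (f ⟨r, by omega⟩) (f ⟨r - 1, by omega⟩),
              γ (((r:ℤ) + i - 4) * p + i + s + p - 1)) = 0 := by
  have hindex : ∀ t : ℤ, ((r:ℤ) + i - 4) * p + i + t + p - 1
      = (i - 2 + ((r - 1 : ℕ) : ℤ)) * p + i + t - 1 := by
    intro t; push_cast [Nat.cast_sub (by omega : 1 ≤ r)]; ring
  simp only [hindex, mul_sub, mul_sum, sum_sub_distrib, sub_eq_zero]
  exact sum_antitone_sum_Icc_above_eq_below _ _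
    (a := ⟨r - 2, by omega⟩) (j := ⟨r - 1, by omega⟩) (b := ⟨r, by omega⟩)
    (Fin.covBy_iff.2 (by simp; omega)) (Fin.covBy_iff.2 (by simp; omega))
    fun s t => γ ((i - 2 + (s:ℕ)) * p + i + t - 1)
end

section
/- Let γ_n(t) satisfy the discrete KdV system γ̇_n = γ_n(Σ_{i=1}^p γ_{n+i} − Σ_{i=1}^p γ_{n-i}) (with γ_n ≡ 0 for n ≤ 0), and for j ∈ {0,...,p} define a^{(j)}_{i,i}(t) = C + Σ_{s=j+1}^{j+p+1} γ_{(i-1)p+i+s}(t). Then the diagonal entries satisfy the Toda equation for k = 0: d/dt a^{(j)}_{i,i} = a^{(j)}_{i+1,i} − a^{(j)}_{i,i-1}, where a^{(j)}_{i+1,i} = Σ_{j+2 ≤ i_2 ≤ i_1 ≤ j+p+1} γ_{(i-1)p+i+i_1} γ_{ip+i+i_2} and a^{(j)}_{i,i-1} = Σ_{j+2 ≤ i_2 ≤ i_1 ≤ j+p+1} γ_{(i-2)p+i+i_1-1} γ_{(i-1)p+i+i_2-1}. -/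
/-!
Differentiating termwise, the derivative of `a_{i,i}` is
`∑_{m ∈ W} ∑_{l=1}^p (γ_m γ_{m+l} − γ_m γ_{m−l})` over a window `W` of `p + 1` consecutive
indices. Substituting `m ↦ m + l` in the second product turns it into `γ_m γ_{m+l}` summed
over the window translated down by `l`, so for each `l` only the terms with `m` in the top `l`
indices of `W` or in the `l` indices just below `W` survive.
These two triangles of products, reindexed, are exactly `a_{i+1,i}` and `a_{i,i-1}`.
-/

open Finset

theorem sum_Icc_translate {M : Type*} [AddCommMonoid M] {f g : ℤ → M} {a b a' b' c : ℤ}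
    (ha : a + c = a') (hb : b + c = b') (h : ∀ x, f x = g (x + c)) :
    ∑ x ∈ Icc a b, f x = ∑ x ∈ Icc a' b', g x := by
  subst ha hb
  rw [← map_add_right_Icc, sum_map]
  exact sum_congr rfl fun x _ => h x

theorem sum_Icc_sub_sum_Icc_sub {M : Type*} [AddCommGroup M] (f : ℤ → M) {a b l : ℤ}
    (hl : 0 ≤ l) (hab : a ≤ b + 1) :
    ∑ x ∈ Icc a b, f x - ∑ x ∈ Icc (a - l) (b - l), f x
      = ∑ x ∈ Icc (b - l + 1) b, f x - ∑ x ∈ Icc (a - l) (a - 1), f x := by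
  rw [sub_eq_sub_iff_add_eq_add, ← sum_union, ← sum_union]
  · congr 1
    ext x
    simp only [mem_union, mem_Icc]
    omega
  all_goals
    refine disjoint_left.2 fun x hx hx' => ?_
    simp only [mem_Icc] at hx hx'
    omega

variable {R : Type*} [CommRing R]

theorem sum_Icc_sum_Icc_mul_add_top (g : ℤ → R) (p : ℕ) (j : ℤ) :
    ∑ l ∈ Icc (1 : ℤ) p, ∑ m ∈ Icc (j + p + 2 - l) (j + p + 1), g m * g (m + l)
      = ∑ i₁ ∈ Icc (j + 2) (j + p + 1), ∑ i₂ ∈ Icc (j + 2) i₁, g i₁ * g (i₂ + p) := by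
  rw [sum_comm' (t' := Icc (j + 2) (j + p + 1)) (s' := fun m => Icc (j + p + 2 - m) p)
    (fun l m => by simp only [mem_Icc]; omega)]
  exact sum_congr rfl fun m _ =>
    sum_Icc_translate (c := m - p) (by ring) (by ring) fun l => by ring_nf

theorem sum_Icc_sum_Icc_mul_add_bottom (g : ℤ → R) (p : ℕ) (j : ℤ) :
    ∑ l ∈ Icc (1 : ℤ) p, ∑ m ∈ Icc (j + 1 - l) j, g m * g (m + l)
      = ∑ i₁ ∈ Icc (j + 2) (j + p + 1), ∑ i₂ ∈ Icc (j + 2) i₁, g (i₁ - p - 1) * g (i₂ - 1) := by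
  rw [sum_comm' (t' := Icc (j + 1 - p) j) (s' := fun m => Icc (j + 1 - m) p)
    (fun l m => by simp only [mem_Icc]; omega)]
  refine sum_Icc_translate (c := p + 1) (by ring) (by ring) fun m => ?_
  exact sum_Icc_translate (c := m + 1) (by ring) (by ring) fun l => by ring_nf

theorem sum_Icc_mul_sum_sub_sum (g : ℤ → R) (p : ℕ) (j : ℤ) :
    ∑ m ∈ Icc (j + 1) (j + p + 1),
        g m * (∑ l ∈ Icc (1 : ℤ) p, g (m + l) - ∑ l ∈ Icc (1 : ℤ) p, g (m - l))
      = ∑ i₁ ∈ Icc (j + 2) (j + p + 1), ∑ i₂ ∈ Icc (j + 2) i₁, g i₁ * g (i₂ + p)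
        - ∑ i₁ ∈ Icc (j + 2) (j + p + 1), ∑ i₂ ∈ Icc (j + 2) i₁, g (i₁ - p - 1) * g (i₂ - 1) := by
  have window (l : ℤ) (hl : l ∈ Icc (1 : ℤ) p) :
      ∑ m ∈ Icc (j + 1) (j + p + 1), g m * g (m + l)
          - ∑ m ∈ Icc (j + 1) (j + p + 1), g m * g (m - l)
        = ∑ m ∈ Icc (j + p + 2 - l) (j + p + 1), g m * g (m + l)
          - ∑ m ∈ Icc (j + 1 - l) j, g m * g (m + l) := by
    rw [mem_Icc] at hl
    rw [sum_Icc_translate (a' := j + 1 - l) (b' := j + p + 1 - l)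
        (f := fun m => g m * g (m - l)) (g := fun m => g m * g (m + l)) (c := -l)
        (by ring) (by ring) fun m => by ring_nf,
      sum_Icc_sub_sum_Icc_sub _ (by omega) (by omega), add_sub_cancel_right,
      show j + p + 1 - l + 1 = j + p + 2 - l by ring]
  simp only [mul_sub, mul_sum, sum_sub_distrib]
  rw [sum_comm, sum_comm (t := Icc (1 : ℤ) p), ← sum_sub_distrib, sum_congr rfl window,
    sum_sub_distrib, sum_Icc_sum_Icc_mul_add_top, sum_Icc_sum_Icc_mul_add_bottom]

theorem stmt_18_general (p : ℕ) (C : ℂ)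
    (γ : ℤ → ℝ → ℂ)
    (hKdV : ∀ n : ℤ, ∀ t : ℝ,
      HasDerivAt (γ n)
        (γ n t * ((∑ m ∈ Finset.Icc (1:ℤ) p, γ (n + m) t)
          - ∑ m ∈ Finset.Icc (1:ℤ) p, γ (n - m) t)) t)
    (j : ℤ) (i : ℤ) :
    ∀ t : ℝ,
      HasDerivAt
        (fun s => C + ∑ m ∈ Finset.Icc (j+1) (j+p+1), γ ((i-1) * p + i + m) s)
        ((∑ i₁ ∈ Finset.Icc (j+2) (j+p+1), ∑ i₂ ∈ Finset.Icc (j+2) i₁,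
            γ ((i-1) * p + i + i₁) t * γ (i * p + i + i₂) t)
          - ∑ i₁ ∈ Finset.Icc (j+2) (j+p+1), ∑ i₂ ∈ Finset.Icc (j+2) i₁,
              γ ((i-2) * p + i + i₁ - 1) t * γ ((i-1) * p + i + i₂ - 1) t) t := by
  intro t
  have hsum := sum_Icc_mul_sum_sub_sum (fun n => γ ((i - 1) * p + i + n) t) p j
  simp only [← add_assoc, ← add_sub_assoc] at hsum
  refine ((HasDerivAt.fun_sum fun m _ => hKdV ((i - 1) * p + i + m) t).const_add C).congr_deriv ?_
  rw [hsum]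
  congr 1 <;> refine sum_congr rfl fun _ _ => sum_congr rfl fun _ _ => by ring_nf

/-- if the `γ`'s solve the discrete KdV system, then the diagonal
entries `a^{(j)}_{i,i} = C + ∑_{s=j+1}^{j+p+1} γ_{(i-1)p+i+s}` satisfy the Toda
equation `d/dt a^{(j)}_{i,i} = a^{(j)}_{i+1,i} − a^{(j)}_{i,i-1}` with the
`k = 1` Bäcklund entries. -/
theorem stmt_18 (p : ℕ) (hp : 1 ≤ p) (C : ℂ)
    (γ : ℤ → ℝ → ℂ)
    (hzero : ∀ n : ℤ, n ≤ 0 → ∀ t, γ n t = 0)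
    (hKdV : ∀ n : ℤ, ∀ t : ℝ,
      HasDerivAt (γ n)
        (γ n t * ((∑ m ∈ Finset.Icc (1:ℤ) p, γ (n + m) t)
          - ∑ m ∈ Finset.Icc (1:ℤ) p, γ (n - m) t)) t)
    (j : ℤ) (hj0 : 0 ≤ j) (hjp : j ≤ p) (i : ℤ) :
    ∀ t : ℝ,
      HasDerivAt
        (fun s => C + ∑ m ∈ Finset.Icc (j+1) (j+p+1), γ ((i-1) * p + i + m) s)
        ((∑ i₁ ∈ Finset.Icc (j+2) (j+p+1), ∑ i₂ ∈ Finset.Icc (j+2) i₁,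
            γ ((i-1) * p + i + i₁) t * γ (i * p + i + i₂) t)
          - ∑ i₁ ∈ Finset.Icc (j+2) (j+p+1), ∑ i₂ ∈ Finset.Icc (j+2) i₁,
              γ ((i-2) * p + i + i₁ - 1) t * γ ((i-1) * p + i + i₂ - 1) t) t :=
  stmt_18_general p C γ hKdV j i
end
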